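/- Fix real parameters α > 0 and β > 0. For every p ≥ 1, every x ∈ [0,1]^p and every y ∈ {0,1}^p with x + y ≠ 0, Δ_STL(x,y) = Δ_CTL(x,y); the same equality holds when x ∈ {0,1}^p and y ∈ [0,1]^p with x + y ≠ 0. Moreover, there exist p ≥ 1 and x, y ∈ [0,1]^p with x + y ≠ 0 such that Δ_STL(x,y) ≠ Δ_CTL(x,y). -/
import Mathlib


open Finset

/-- The L¹ norm of a vector. -/
noncomputable def l1 {p : ℕ} (z : Fin p → ℝ) : ℝ := ∑ i, |z i|

/-- The compatible Tversky loss with parameters `α`, `β`. -/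
noncomputable def CTL (α β : ℝ) {p : ℕ} (x y : Fin p → ℝ) : ℝ :=
  1 - (l1 (x + y) - l1 (x - y)) /
    (2 * α * l1 x + 2 * β * l1 y + (1 - α - β) * (l1 (x + y) - l1 (x - y)))

/-- The soft Tversky loss with parameters `α`, `β`. -/
noncomputable def STL (α β : ℝ) {p : ℕ} (x y : Fin p → ℝ) : ℝ :=
  1 - (∑ i, x i * y i) /
    (α * l1 x + β * l1 y + (1 - α - β) * ∑ i, x i * y i)

/-- Appendix E: the compatible Tversky loss is identical to the soft Tversky
loss in a standard setting with hard labels, but differs on soft labels. -/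
theorem stl_eq_ctl_hard_labels_and_differ_soft (α β : ℝ) (hα : 0 < α) (hβ : 0 < β) :
    (∀ p : ℕ, 1 ≤ p → ∀ x y : Fin p → ℝ,
      (∀ i, 0 ≤ x i ∧ x i ≤ 1) → (∀ i, 0 ≤ y i ∧ y i ≤ 1) → x + y ≠ 0 →
      ((∀ i, y i = 0 ∨ y i = 1) ∨ (∀ i, x i = 0 ∨ x i = 1)) →
      STL α β x y = CTL α β x y) ∧
    (∃ p : ℕ, 1 ≤ p ∧ ∃ x y : Fin p → ℝ,
      (∀ i, 0 ≤ x i ∧ x i ≤ 1) ∧ (∀ i, 0 ≤ y i ∧ y i ≤ 1) ∧ x + y ≠ 0 ∧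
      STL α β x y ≠ CTL α β x y) := by
  constructor
  · intro p hp x y hx hy hxy hhard
    have key : l1 (x + y) - l1 (x - y) = 2 * ∑ i, x i * y i := by
      simp only [l1, Pi.add_apply, Pi.sub_apply, ← Finset.sum_sub_distrib, Finset.mul_sum]
      apply Finset.sum_congr rfl
      intro i _
      have hxi := hx i; have hyi := hy i
      rcases hhard with h | h
      · rcases h i with h0 | h1
        · rw [h0]; simp [abs_of_nonneg hxi.1]
        · rw [h1, abs_of_nonneg (by linarith [hxi.1] : (0:ℝ) ≤ x i + 1),
            abs_of_nonpos (by linarith [hxi.2] : x i - 1 ≤ 0)]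
          ring
      · rcases h i with h0 | h1
        · rw [h0]; simp [abs_of_nonneg hyi.1, abs_neg]
        · rw [h1, abs_of_nonneg (by linarith [hyi.1] : (0:ℝ) ≤ 1 + y i),
            abs_of_nonneg (by linarith [hyi.2] : (0:ℝ) ≤ 1 - y i)]
          ring
    unfold STL CTL
    rw [key]
    congr 1
    have hD : 2 * α * l1 x + 2 * β * l1 y + (1 - α - β) * (2 * ∑ i, x i * y i)
        = 2 * (α * l1 x + β * l1 y + (1 - α - β) * ∑ i, x i * y i) := by ring
    rw [hD, mul_div_mul_left _ _ (two_ne_zero)]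
  · refine ⟨1, le_refl 1, fun _ => 1/2, fun _ => 1/2,
      fun i => ⟨by norm_num, by norm_num⟩, fun i => ⟨by norm_num, by norm_num⟩, ?_, ?_⟩
    · intro h
      have := congrFun h 0
      simp at this
    · have h1 : (1 + α + β) ≠ 0 := by linarith
      unfold STL CTL l1
      simp only [Fin.sum_univ_one, Pi.add_apply, Pi.sub_apply]
      rw [show |(1/2:ℝ)| = 1/2 by norm_num, show ((1:ℝ)/2 + 1/2) = 1 by norm_num,
        show ((1:ℝ)/2 - 1/2) = 0 by norm_num, abs_zero, abs_one]
      intro h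
      have h2 : α * (1/2) + β * (1/2) + (1-α-β) * (1/2*(1/2)) = (1+α+β)/4 := by ring
      have h3 : 2 * α * (1/2) + 2 * β * (1/2) + (1-α-β) * (1 - 0) = 1 := by ring
      rw [h2, h3] at h
      field_simp at h
      nlinarith
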